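/- Large deviations limit for the Gilbert–Varshamov bound: let s_1,…,s_σ ≥ 2 be integers, a_1,…,a_σ > 0 with ∑ a_i = 1, and μ ∈ (0,1). For each n let l_1^{(n)},…,l_σ^{(n)} ∈ ℕ with ∑_i l_i^{(n)} = n and l_i^{(n)}/n → a_i, let b_n, r_n be the corresponding block and cost functions, and let T_n ∈ ℕ with T_n/n → μ. Then lim_{n→∞} (1/n) log ( ∑_{x ∈ {0,1}^n with S(x) ≤ T_n} ∏_{j=1}^n r_n(x_j, j) ) = sup { ∑_{i=1}^σ a_i ( θ_i log(s_i − 1) + H(θ_i) ) : θ ∈ (0,1)^σ, ∑_{i=1}^σ a_i θ_i ≤ μ }. -/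

import Mathlib

/-!
Write `c i = s i - 1`, so that the sum is the `c`-weighted size of the Hamming ball of radius
`T n`. For every `η ≥ 0`, Chernoff's bound gives at most
`exp (η T n) * ∏ j, (1 + c (b j) e^{-η}) = exp (η T n) * ∏ i, (1 + c i e^{-η}) ^ l n i`.
Conversely, the words with `⌊θ i * l n i⌋` ones in block `i` lie in the ball when
`∑ a i θ i < μ`, and by Stirling their number has growth rate `∑ a i H(θ i)`.
The two exponents meet by convex duality: `θ log c + H θ ≤ log (1 + c)`, with equality at
`θ = c / (1 + c)`; choosing `η` by the intermediate value theorem so that the tilted parameters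
`c i e^{-η} / (1 + c i e^{-η})` satisfy complementary slackness, the supremum is attained and
equals `η μ + ∑ a i log (1 + c i e^{-η})`.
-/

open Finset

noncomputable def Hent (θ : ℝ) : ℝ := -θ * Real.log θ - (1 - θ) * Real.log (1 - θ)

open Real Filter Topology
open scoped Nat

lemma Hent_eq_binEntropy : Hent = binEntropy := by
  ext θ
  simp only [Hent, binEntropy, log_inv]
  ring

@[fun_prop]
lemma continuous_Hent : Continuous Hent := Hent_eq_binEntropy ▸ binEntropy_continuous

lemma mul_log_add_Hent_le_log_one_add {c θ : ℝ} (hc : 0 < c) (hθ : θ ∈ Set.Ioo 0 1) :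
    θ * log c + Hent θ ≤ log (1 + c) := by
  obtain ⟨hθ0, hθ1⟩ := hθ
  have hθ1' : 0 < 1 - θ := by linarith
  -- concavity of `log` at the points `c / θ` and `1 / (1 - θ)` with weights `θ` and `1 - θ`
  have h := strictConcaveOn_log_Ioi.concaveOn.2 (Set.mem_Ioi.2 (div_pos hc hθ0))
    (Set.mem_Ioi.2 (one_div_pos.2 hθ1')) hθ0.le hθ1'.le (by ring)
  rw [smul_eq_mul, smul_eq_mul, smul_eq_mul, smul_eq_mul,
    mul_div_cancel₀ _ hθ0.ne', mul_one_div_cancel hθ1'.ne', log_div hc.ne' hθ0.ne',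
    one_div, log_inv, add_comm c] at h
  simp only [Hent]
  linarith

lemma mul_log_add_Hent_div_one_add {c : ℝ} (hc : 0 < c) :
    c / (1 + c) * log c + Hent (c / (1 + c)) = log (1 + c) := by
  have h1c : 0 < 1 + c := by linarith
  have e : 1 - c / (1 + c) = (1 + c)⁻¹ := by field_simp; ring
  rw [Hent, e, log_div hc.ne' h1c.ne', log_inv]
  field_simp
  ring

lemma mul_log_sub_le_log_factorial (n : ℕ) : n * log n - n ≤ log n ! := by
  obtain rfl | hn := eq_or_ne n 0
  · simp
  have hn' : (0 : ℝ) < n := by positivity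
  have h := log_le_log (by positivity) (pow_div_factorial_le_exp n n.cast_nonneg n)
  rw [log_div (by positivity) (by positivity), log_pow, log_exp] at h
  linarith

lemma log_factorial_le {n : ℕ} (hn : n ≠ 0) : log n ! ≤ n * log n - n + 1 + log n / 2 := by
  obtain ⟨k, rfl⟩ := Nat.exists_eq_add_one_of_ne_zero hn
  have h := Stirling.log_stirlingSeq'_antitone (Nat.zero_le k)
  simp only [Function.comp_apply, Stirling.log_stirlingSeq_formula, Nat.succ_eq_add_one,
    zero_add, Stirling.stirlingSeq_one] at h
  have hk : (0 : ℝ) < (k + 1 : ℕ) := by positivity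
  rw [log_div (exp_pos 1).ne' (by positivity), log_exp, log_sqrt (by norm_num),
    log_mul (by norm_num) hk.ne', log_div hk.ne' (exp_pos 1).ne', log_exp] at h
  linarith

lemma mul_Hent_sub_le_log_choose {m k : ℕ} (hk : 0 < k) (hkm : k < m) :
    m * Hent (k / m) - (2 + log m) ≤ log (m.choose k) := by
  have hk' : (0 : ℝ) < k := by exact_mod_cast hk
  have hkm' : (k : ℝ) < m := by exact_mod_cast hkm
  have hmk : ((m - k : ℕ) : ℝ) = m - k := Nat.cast_sub hkm.le
  have hmk' : 0 < (m : ℝ) - k := by linarith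
  have hm' : (0 : ℝ) < m := hk'.trans hkm'
  have hent : m * Hent (k / m) = m * log m - k * log k - (m - k) * log (m - k) := by
    have e : 1 - (k : ℝ) / m = (m - k) / m := by field_simp
    rw [Hent, e, log_div hk'.ne' hm'.ne', log_div hmk'.ne' hm'.ne']
    field_simp
    ring
  have hchoose : log (m.choose k) = log m ! - log k ! - log (m - k)! := by
    have h := congrArg (fun x : ℕ => log x) (Nat.choose_mul_factorial_mul_factorial hkm.le)
    simp only [Nat.cast_mul] at h
    rw [log_mul (mul_ne_zero (by exact_mod_cast (Nat.choose_pos hkm.le).ne') (by positivity))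
      (by positivity), log_mul (by exact_mod_cast (Nat.choose_pos hkm.le).ne') (by positivity)] at h
    linarith
  have h1 := mul_log_sub_le_log_factorial m
  have h2 := log_factorial_le hk.ne'
  have h3 := log_factorial_le (Nat.sub_ne_zero_of_lt hkm)
  have h4 : log k ≤ log m := log_le_log hk' hkm'.le
  have h5 : log (m - k) ≤ log m := log_le_log hmk' (by linarith)
  rw [hmk] at h3
  rw [hent, hchoose]
  linarith

noncomputable def hammingBallWeight {ι : Type*} [Fintype ι] [DecidableEq ι] (w : ι → ℝ)
    (T : ℕ) : ℝ :=
  ∑ x ∈ univ.filter (fun x : ι → Bool => (∑ j, if x j then 1 else 0) ≤ T),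
    ∏ j, if x j then w j else 1

section HammingBall

variable {ι κ : Type*} [Fintype ι] [DecidableEq ι] [Fintype κ] [DecidableEq κ]

lemma sum_prod_ite_eq_prod_one_add (w : ι → ℝ) :
    ∑ x : ι → Bool, ∏ j, (if x j then w j else 1) = ∏ j, (1 + w j) := by
  simpa [add_comm] using (Fintype.prod_sum fun j (b : Bool) => if b then w j else 1).symm

omit [DecidableEq ι] in
lemma prod_ite_nonneg {w : ι → ℝ} (hw : ∀ j, 0 ≤ w j) (x : ι → Bool) :
    0 ≤ ∏ j, (if x j then w j else 1) :=
  prod_nonneg fun j _ => by split_ifs <;> simp [hw j]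

lemma one_le_hammingBallWeight {w : ι → ℝ} (hw : ∀ j, 0 ≤ w j) (T : ℕ) :
    1 ≤ hammingBallWeight w T := by
  refine le_of_eq_of_le ?_ (single_le_sum (fun x _ => prod_ite_nonneg hw x)
    (mem_filter.2 ⟨mem_univ (fun _ : ι => false), by simp⟩ : (fun _ : ι => false) ∈
      univ.filter (fun x : ι → Bool => (∑ j, if x j then 1 else 0) ≤ T)))
  simp

-- Chernoff: on the ball, `exp (η * (T - #support)) ≥ 1`.
lemma hammingBallWeight_le_exp_mul_prod {w : ι → ℝ} (hw : ∀ j, 0 ≤ w j) (T : ℕ) {η : ℝ}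
    (hη : 0 ≤ η) : hammingBallWeight w T ≤ exp (η * T) * ∏ j, (1 + w j * exp (-η)) := by
  have htilt : ∀ x : ι → Bool, ∏ j, (if x j then w j else 1) =
      exp (η * ∑ j, if x j then 1 else 0) * ∏ j, (if x j then w j * exp (-η) else 1) := by
    intro x
    rw [mul_sum, exp_sum, ← prod_mul_distrib]
    refine prod_congr rfl fun j _ => ?_
    split_ifs
    · rw [mul_one, mul_left_comm, ← exp_add, add_neg_cancel, exp_zero, mul_one]
    · simp
  calc hammingBallWeight w T
      ≤ ∑ x ∈ univ.filter (fun x : ι → Bool => (∑ j, if x j then 1 else 0) ≤ T),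
          exp (η * T) * ∏ j, (if x j then w j * exp (-η) else 1) := by
        refine sum_le_sum fun x hx => ?_
        rw [htilt x]
        refine mul_le_mul_of_nonneg_right (exp_le_exp.2 (mul_le_mul_of_nonneg_left ?_ hη))
          (prod_ite_nonneg (fun j => mul_nonneg (hw j) (exp_pos _).le) x)
        exact_mod_cast (mem_filter.1 hx).2
    _ ≤ ∑ x : ι → Bool, exp (η * T) * ∏ j, (if x j then w j * exp (-η) else 1) :=
        sum_le_sum_of_subset_of_nonneg (filter_subset _ _) fun x _ _ =>
          mul_nonneg (exp_pos _).le (prod_ite_nonneg (fun j => mul_nonneg (hw j) (exp_pos _).le) x)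
    _ = exp (η * T) * ∏ j, (1 + w j * exp (-η)) := by
        rw [← mul_sum, sum_prod_ite_eq_prod_one_add]

lemma prod_choose_mul_pow_le_hammingBallWeight (β : ι → κ) {v : κ → ℝ} (hv : ∀ i, 0 ≤ v i)
    {t : κ → ℕ} {T : ℕ} (hT : ∑ i, t i ≤ T) :
    ∏ i, (((#{j | β j = i}).choose (t i) : ℕ) * v i ^ t i : ℝ) ≤
      hammingBallWeight (fun j => v (β j)) T := by
  -- choose `t i` positions in each fibre of `β`; the indicator of their union determines them
  set D := Fintype.piFinset fun i => (univ.filter fun j => β j = i).powersetCard (t i)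
  set ind : (κ → Finset ι) → ι → Bool := fun A j => decide (j ∈ A (β j))
  have hmemD : ∀ A ∈ D, ∀ i, A i ⊆ univ.filter (fun j => β j = i) ∧ #(A i) = t i :=
    fun A hA i => mem_powersetCard.1 (Fintype.mem_piFinset.1 hA i)
  have hrec : ∀ A ∈ D, ∀ i, univ.filter (fun j => ind A j = true ∧ β j = i) = A i := by
    intro A hA i
    ext j
    constructor
    · intro hj
      obtain ⟨hj, rfl⟩ := (mem_filter.1 hj).2
      simpa [ind] using hj
    · intro hj
      have hβ : β j = i := (mem_filter.1 ((hmemD A hA i).1 hj)).2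
      simp [ind, hβ, hj]
  have hcount : ∀ A ∈ D, (∑ j, if ind A j then 1 else 0) = ∑ i, t i := by
    intro A hA
    rw [sum_boole, card_eq_sum_card_fiberwise (f := β) (t := univ) (fun _ _ => mem_univ _)]
    refine sum_congr rfl fun i _ => ?_
    rw [filter_filter, hrec A hA i, (hmemD A hA i).2]
  have hweight : ∀ A ∈ D, ∏ j, (if ind A j then v (β j) else 1) = ∏ i, v i ^ t i := by
    intro A hA
    rw [← prod_fiberwise univ β]
    refine prod_congr rfl fun i _ => ?_
    rw [prod_congr rfl fun j hj => by rw [(mem_filter.1 hj).2], prod_ite, prod_const_one,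
      mul_one, prod_const, filter_filter]
    simp_rw [and_comm (a := β _ = i)]
    rw [hrec A hA i, (hmemD A hA i).2]
  have hinj : Set.InjOn ind D := by
    intro A hA A' hA' h
    funext i
    rw [← hrec A hA i, ← hrec A' hA' i, h]
  calc ∏ i, (((#{j | β j = i}).choose (t i) : ℕ) * v i ^ t i : ℝ)
      = ∑ A ∈ D, ∏ i, v i ^ t i := by
        rw [sum_const, nsmul_eq_mul, prod_mul_distrib, Fintype.card_piFinset]
        simp
    _ = ∑ x ∈ D.image ind, ∏ j, (if x j then v (β j) else 1) := by
        rw [sum_image hinj]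
        exact sum_congr rfl fun A hA => (hweight A hA).symm
    _ ≤ hammingBallWeight (fun j => v (β j)) T := by
        refine sum_le_sum_of_subset_of_nonneg ?_ fun x _ _ => prod_ite_nonneg (fun j => hv _) x
        intro x hx
        obtain ⟨A, hA, rfl⟩ := mem_image.1 hx
        exact mem_filter.2 ⟨mem_univ _, (hcount A hA).trans_le hT⟩

lemma log_hammingBallWeight_le (β : ι → κ) {v : κ → ℝ} (hv : ∀ i, 0 ≤ v i) (T : ℕ) {η : ℝ}
    (hη : 0 ≤ η) :
    log (hammingBallWeight (fun j => v (β j)) T) ≤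
      η * T + ∑ i, #{j | β j = i} * log (1 + v i * exp (-η)) := by
  have hpos : ∀ i, 0 < 1 + v i * exp (-η) := fun i => by have := hv i; positivity
  have h := hammingBallWeight_le_exp_mul_prod (fun j => hv (β j)) T hη
  rw [← prod_fiberwise' univ β fun i => 1 + v i * exp (-η)] at h
  simp_rw [prod_const] at h
  have hpos' := one_pos.trans_le (one_le_hammingBallWeight (fun j => hv (β j)) T)
  refine (log_le_log hpos' h).trans_eq ?_
  rw [log_mul (exp_pos _).ne' (prod_ne_zero_iff.2 fun i _ => pow_ne_zero _ (hpos i).ne'), log_exp,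
    log_prod fun i _ => pow_ne_zero _ (hpos i).ne']
  simp_rw [log_pow]

lemma sum_log_choose_add_le_log_hammingBallWeight (β : ι → κ) {v : κ → ℝ} (hv : ∀ i, 0 < v i)
    {t : κ → ℕ} (ht : ∀ i, t i ≤ #{j | β j = i}) {T : ℕ} (hT : ∑ i, t i ≤ T) :
    ∑ i, (log ((#{j | β j = i}).choose (t i)) + t i * log (v i)) ≤
      log (hammingBallWeight (fun j => v (β j)) T) := by
  have hpos : ∀ i, (0 : ℝ) < ((#{j | β j = i}).choose (t i) : ℕ) * v i ^ t i := fun i =>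
    mul_pos (by exact_mod_cast Nat.choose_pos (ht i)) (pow_pos (hv i) _)
  have h := log_le_log (prod_pos fun i _ => hpos i)
    (prod_choose_mul_pow_le_hammingBallWeight β (fun i => (hv i).le) hT)
  rw [log_prod fun i _ => (hpos i).ne'] at h
  refine le_of_eq_of_le (sum_congr rfl fun i _ => ?_) h
  rw [log_mul (ne_of_gt (by exact_mod_cast Nat.choose_pos (ht i))) (pow_pos (hv i) _).ne',
    log_pow]

end HammingBall

lemma card_filter_eq_of_block {σ n : ℕ} {l : Fin σ → ℕ} (hl : ∑ i, l i = n) {b : ℕ → Fin σ}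
    (hb : ∀ j < n, ∀ i : Fin σ, b j = i ↔
      (∑ k ∈ univ.filter (fun k => k < i), l k) ≤ j ∧
        j < (∑ k ∈ univ.filter (fun k => k < i), l k) + l i) (i : Fin σ) :
    #{j : Fin n | b j = i} = l i := by
  set P := ∑ k ∈ univ.filter (fun k => k < i), l k
  have hPn : P + l i ≤ n := by
    rw [← hl, add_comm, ← sum_insert (by simp : i ∉ univ.filter (fun k => k < i))]
    exact sum_le_sum_of_subset (subset_univ _)
  have hmap : (univ.filter fun j : Fin n => b j = i).map Fin.valEmbedding = Ico P (P + l i) := by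
    ext m
    simp only [Finset.mem_map, mem_filter, mem_univ, true_and, Fin.valEmbedding_apply, mem_Ico]
    constructor
    · rintro ⟨j, hj, rfl⟩
      exact (hb j j.isLt i).1 hj
    · intro hm
      exact ⟨⟨m, hm.2.trans_le hPn⟩, (hb m (hm.2.trans_le hPn) i).2 hm, rfl⟩
  rw [← card_map, hmap, Nat.card_Ico, Nat.add_sub_cancel_left]

section Duality

variable {ι : Type*} [Fintype ι] {a c : ι → ℝ} {μ : ℝ}

lemma sum_mul_log_add_Hent_le (ha : ∀ i, 0 ≤ a i) (hc : ∀ i, 0 < c i) {θ : ι → ℝ}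
    (hθ : ∀ i, θ i ∈ Set.Ioo 0 1) (hθμ : ∑ i, a i * θ i ≤ μ) {η : ℝ} (hη : 0 ≤ η) :
    ∑ i, a i * (θ i * log (c i) + Hent (θ i)) ≤ η * μ + ∑ i, a i * log (1 + c i * exp (-η)) := by
  have hterm : ∀ i, θ i * log (c i) + Hent (θ i) ≤ η * θ i + log (1 + c i * exp (-η)) := by
    intro i
    have h := mul_log_add_Hent_le_log_one_add (mul_pos (hc i) (exp_pos (-η))) (hθ i)
    rw [log_mul (hc i).ne' (exp_pos _).ne', log_exp] at h
    linarith
  calc ∑ i, a i * (θ i * log (c i) + Hent (θ i))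
      ≤ ∑ i, a i * (η * θ i + log (1 + c i * exp (-η))) :=
        sum_le_sum fun i _ => mul_le_mul_of_nonneg_left (hterm i) (ha i)
    _ = η * ∑ i, a i * θ i + ∑ i, a i * log (1 + c i * exp (-η)) := by
        rw [mul_sum, ← sum_add_distrib]
        exact sum_congr rfl fun i _ => by ring
    _ ≤ η * μ + ∑ i, a i * log (1 + c i * exp (-η)) := by gcongr

lemma exists_tilt_complementary (hc : ∀ i, 0 < c i) (hμ : 0 < μ) :
    ∃ η, 0 ≤ η ∧ ∑ i, a i * (c i * exp (-η) / (1 + c i * exp (-η))) ≤ μ ∧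
      (η = 0 ∨ ∑ i, a i * (c i * exp (-η) / (1 + c i * exp (-η))) = μ) := by
  set g : ℝ → ℝ := fun η => ∑ i, a i * (c i * exp (-η) / (1 + c i * exp (-η)))
  have hden : ∀ η i, 1 + c i * exp (-η) ≠ 0 := fun η i => by have := hc i; positivity
  have hg : Continuous g :=
    continuous_finsetSum _ fun i _ =>
      continuous_const.mul (Continuous.div (by fun_prop) (by fun_prop) (hden · i))
  have hg_lim : Tendsto g atTop (𝓝 0) := by
    have h := tendsto_finsetSum univ fun i _ =>
      (((tendsto_exp_neg_atTop_nhds_zero.const_mul (c i)).div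
        ((tendsto_exp_neg_atTop_nhds_zero.const_mul (c i)).const_add 1) (by simp)).const_mul (a i))
    simpa using h
  by_cases h0 : g 0 ≤ μ
  · exact ⟨0, le_rfl, h0, Or.inl rfl⟩
  obtain ⟨M, hM, hM0⟩ := ((hg_lim.eventually_lt_const hμ).and (eventually_ge_atTop 0)).exists
  obtain ⟨η, hη, hgη⟩ := intermediate_value_Icc' hM0 hg.continuousOn ⟨hM.le, (not_le.1 h0).le⟩
  exact ⟨η, hη.1, hgη.le, Or.inr hgη⟩

lemma exists_isGreatest_sum_mul_log_add_Hent (ha : ∀ i, 0 ≤ a i) (hc : ∀ i, 0 < c i)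
    (hμ : 0 < μ) :
    ∃ η, 0 ≤ η ∧ IsGreatest {v | ∃ θ : ι → ℝ, (∀ i, θ i ∈ Set.Ioo 0 1) ∧
        ∑ i, a i * θ i ≤ μ ∧ v = ∑ i, a i * (θ i * log (c i) + Hent (θ i))}
      (η * μ + ∑ i, a i * log (1 + c i * exp (-η))) := by
  obtain ⟨η, hη, hθμ, hslack⟩ := exists_tilt_complementary (a := a) hc hμ
  set d : ι → ℝ := fun i => c i * exp (-η) with hd
  have hd0 : ∀ i, 0 < d i := fun i => mul_pos (hc i) (exp_pos _)
  set θ : ι → ℝ := fun i => d i / (1 + d i) with hθ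
  have hterm : ∀ i, θ i * log (c i) + Hent (θ i) = η * θ i + log (1 + d i) := by
    intro i
    have h := mul_log_add_Hent_div_one_add (hd0 i)
    rw [hd, log_mul (hc i).ne' (exp_pos _).ne', log_exp] at h
    simp only [hθ, hd]
    linarith
  have hslack' : η * ∑ i, a i * θ i = η * μ := by
    rcases hslack with rfl | h
    · simp
    · rw [h]
  refine ⟨η, hη, ⟨θ, fun i => ⟨div_pos (hd0 i) (by linarith [hd0 i]),
    (div_lt_one (by linarith [hd0 i])).2 (by linarith)⟩, hθμ, ?_⟩, ?_⟩
  · simp_rw [hterm, mul_add, sum_add_distrib, ← hslack', mul_sum]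
    exact congrArg₂ _ (sum_congr rfl fun i _ => by ring) rfl
  · rintro v ⟨θ', hθ', hθ'μ, rfl⟩
    exact sum_mul_log_add_Hent_le ha hc hθ' hθ'μ hη

lemma exists_lt_sum_mul_log_add_Hent (hμ : 0 < μ) {θ : ι → ℝ} (hθ : ∀ i, θ i ∈ Set.Ioo 0 1)
    (hθμ : ∑ i, a i * θ i ≤ μ) {x : ℝ} (hx : x < ∑ i, a i * (θ i * log (c i) + Hent (θ i))) :
    ∃ θ' : ι → ℝ, (∀ i, θ' i ∈ Set.Ioo 0 1) ∧ ∑ i, a i * θ' i < μ ∧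
      x < ∑ i, a i * (θ' i * log (c i) + Hent (θ' i)) := by
  -- shrink `θ` slightly towards `0`
  set F : ℝ → ℝ := fun r => ∑ i, a i * (r * θ i * log (c i) + Hent (r * θ i))
  have hF : Continuous F := by fun_prop
  have hxF : x < F 1 := by simpa [F] using hx
  obtain ⟨r, hxr, hr0, hr1⟩ := ((((hF.tendsto 1).mono_left nhdsWithin_le_nhds).eventually
    (lt_mem_nhds hxF)).and (Ioo_mem_nhdsLT zero_lt_one)).exists
  refine ⟨fun i => r * θ i, fun i => ⟨mul_pos hr0 (hθ i).1,
    (mul_lt_of_lt_one_left (hθ i).1 hr1).trans (hθ i).2⟩, ?_, hxr⟩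
  calc ∑ i, a i * (r * θ i) = r * ∑ i, a i * θ i := by
        rw [mul_sum]
        exact sum_congr rfl fun i _ => by ring
    _ ≤ r * μ := mul_le_mul_of_nonneg_left hθμ hr0.le
    _ < μ := mul_lt_of_lt_one_left hμ hr1

end Duality

section Asymptotics

lemma tendsto_atTop_of_tendsto_div {u : ℕ → ℝ} {α : ℝ} (hα : 0 < α)
    (hu : Tendsto (fun n => u n / n) atTop (𝓝 α)) : Tendsto u atTop atTop := by
  refine (hu.pos_mul_atTop hα tendsto_natCast_atTop_atTop).congr' ?_
  filter_upwards [eventually_ne_atTop 0] with n hn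
  field_simp

variable {m : ℕ → ℕ} {α θ : ℝ}

lemma tendsto_natFloor_mul_div (hα : 0 < α) (hm : Tendsto (fun n => (m n : ℝ) / n) atTop (𝓝 α))
    (hθ : 0 ≤ θ) : Tendsto (fun n => (⌊θ * m n⌋₊ : ℝ) / n) atTop (𝓝 (θ * α)) := by
  have hm' := tendsto_atTop_of_tendsto_div hα hm
  refine (((tendsto_nat_floor_mul_div_atTop hθ).comp hm').mul hm).congr' ?_
  filter_upwards [hm'.eventually_gt_atTop 0] with n hn
  simp only [Function.comp_apply]
  field_simp

lemma exists_tendsto_le_log_choose_natFloor (hα : 0 < α)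
    (hm : Tendsto (fun n => (m n : ℝ) / n) atTop (𝓝 α)) (hθ : θ ∈ Set.Ioo 0 1) :
    ∃ g : ℕ → ℝ, Tendsto g atTop (𝓝 (α * Hent θ)) ∧
      ∀ᶠ n in atTop, g n ≤ log ((m n).choose ⌊θ * m n⌋₊) / n := by
  have hm' := tendsto_atTop_of_tendsto_div hα hm
  refine ⟨fun n => m n / n * (Hent (⌊θ * m n⌋₊ / m n) - (2 + log (m n)) / m n), ?_, ?_⟩
  · have hH := (continuous_Hent.tendsto θ).comp
      ((tendsto_nat_floor_mul_div_atTop hθ.1.le).comp hm')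
    have herr : Tendsto (fun x : ℝ => (2 + log x) / x) atTop (𝓝 0) := by
      simpa [add_div] using (tendsto_const_nhds.div_atTop tendsto_id).add
        isLittleO_log_id_atTop.tendsto_div_nhds_zero
    simpa using hm.mul (hH.sub (herr.comp hm'))
  · filter_upwards [(hm'.const_mul_atTop hθ.1).eventually_ge_atTop 1] with n hn
    have hm0 : (0 : ℝ) < m n := by nlinarith [hθ.2, (m n).cast_nonneg (α := ℝ)]
    have hk0 : 0 < ⌊θ * m n⌋₊ := Nat.floor_pos.2 hn
    have hkm : ⌊θ * m n⌋₊ < m n := (Nat.floor_lt (by positivity)).2 (by nlinarith [hθ.2])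
    calc _ = (m n * Hent (⌊θ * m n⌋₊ / m n) - (2 + log (m n))) / n := by field_simp
      _ ≤ _ := div_le_div_of_nonneg_right (mul_Hent_sub_le_log_choose hk0 hkm) n.cast_nonneg

variable {ι : Type*} [Fintype ι] [DecidableEq ι] {a c : ι → ℝ} {l : ℕ → ι → ℕ}
  {β : ∀ n, Fin n → ι} {T : ℕ → ℕ} {μ : ℝ}

lemma eventually_lt_log_hammingBallWeight_div (ha : ∀ i, 0 < a i) (hc : ∀ i, 0 < c i)
    (hla : ∀ i, Tendsto (fun n => (l n i : ℝ) / n) atTop (𝓝 (a i)))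
    (hβ : ∀ n i, #{j | β n j = i} = l n i) (hT : Tendsto (fun n => (T n : ℝ) / n) atTop (𝓝 μ))
    {θ : ι → ℝ} (hθ : ∀ i, θ i ∈ Set.Ioo 0 1) (hθμ : ∑ i, a i * θ i < μ) {x : ℝ}
    (hx : x < ∑ i, a i * (θ i * log (c i) + Hent (θ i))) :
    ∀ᶠ n in atTop, x < 1 / n * log (hammingBallWeight (fun j => c (β n j)) (T n)) := by
  set t : ℕ → ι → ℕ := fun n i => ⌊θ i * l n i⌋₊
  have ht_div : ∀ i, Tendsto (fun n => (t n i : ℝ) / n) atTop (𝓝 (θ i * a i)) :=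
    fun i => tendsto_natFloor_mul_div (ha i) (hla i) (hθ i).1.le
  have htl : ∀ n i, t n i ≤ #{j | β n j = i} := fun n i => by
    rw [hβ]
    exact Nat.floor_le_of_le (mul_le_of_le_one_left (Nat.cast_nonneg _) (hθ i).2.le)
  have htT : ∀ᶠ n in atTop, ∑ i, t n i ≤ T n := by
    have h := (tendsto_finsetSum univ fun i _ => ht_div i).eventually_lt hT
      (by simpa only [mul_comm] using hθμ)
    filter_upwards [h, eventually_gt_atTop 0] with n hn hn0
    rw [← sum_div, div_lt_div_iff_of_pos_right (by positivity)] at hn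
    exact_mod_cast hn.le
  choose g hg_lim hg_le using fun i => exists_tendsto_le_log_choose_natFloor (ha i) (hla i) (hθ i)
  have hlim : Tendsto (fun n => ∑ i, (g i n + (t n i : ℝ) / n * log (c i))) atTop
      (𝓝 (∑ i, a i * (θ i * log (c i) + Hent (θ i)))) := by
    refine tendsto_finsetSum _ fun i _ => ?_
    convert (hg_lim i).add ((ht_div i).mul_const (log (c i))) using 2
    ring
  filter_upwards [hlim.eventually_const_lt hx, htT, eventually_all.2 hg_le] with n hxn hTn hgn
  have h := sum_log_choose_add_le_log_hammingBallWeight (β n) hc (htl n) hTn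
  simp_rw [hβ] at h
  calc x < ∑ i, (g i n + (t n i : ℝ) / n * log (c i)) := hxn
    _ ≤ ∑ i, (log ((l n i).choose (t n i)) / n + (t n i : ℝ) / n * log (c i)) :=
        sum_le_sum fun i _ => add_le_add (hgn i) le_rfl
    _ = 1 / n * ∑ i, (log ((l n i).choose (t n i)) + t n i * log (c i)) := by
        rw [mul_sum]
        exact sum_congr rfl fun i _ => by ring
    _ ≤ 1 / n * log (hammingBallWeight (fun j => c (β n j)) (T n)) :=
        mul_le_mul_of_nonneg_left h (by positivity)

lemma eventually_log_hammingBallWeight_div_lt (hc : ∀ i, 0 ≤ c i)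
    (hla : ∀ i, Tendsto (fun n => (l n i : ℝ) / n) atTop (𝓝 (a i)))
    (hβ : ∀ n i, #{j | β n j = i} = l n i) (hT : Tendsto (fun n => (T n : ℝ) / n) atTop (𝓝 μ))
    {η : ℝ} (hη : 0 ≤ η) {x : ℝ} (hx : η * μ + ∑ i, a i * log (1 + c i * exp (-η)) < x) :
    ∀ᶠ n in atTop, 1 / n * log (hammingBallWeight (fun j => c (β n j)) (T n)) < x := by
  have hlim : Tendsto (fun n => η * (T n / n) + ∑ i, l n i / n * log (1 + c i * exp (-η)))
      atTop (𝓝 (η * μ + ∑ i, a i * log (1 + c i * exp (-η)))) :=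
    (hT.const_mul η).add (tendsto_finsetSum _ fun i _ => (hla i).mul_const _)
  filter_upwards [hlim.eventually_lt_const hx] with n hn
  have h := log_hammingBallWeight_le (β n) hc (T n) hη
  simp_rw [hβ] at h
  calc 1 / n * log (hammingBallWeight (fun j => c (β n j)) (T n))
      ≤ 1 / n * (η * T n + ∑ i, l n i * log (1 + c i * exp (-η))) :=
        mul_le_mul_of_nonneg_left h (by positivity)
    _ = η * (T n / n) + ∑ i, l n i / n * log (1 + c i * exp (-η)) := by
        rw [mul_add, mul_sum]
        congr 1
        · ring
        · exact sum_congr rfl fun i _ => by ring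
    _ < x := hn

end Asymptotics

theorem gilbert_varshamov_large_deviations_limit_general
    (σ : ℕ) (s : Fin σ → ℕ) (hs : ∀ i, 2 ≤ s i)
    (a : Fin σ → ℝ) (ha : ∀ i, 0 < a i)
    (μ : ℝ) (hμ : μ ∈ Set.Ioo (0 : ℝ) 1)
    (l : ℕ → Fin σ → ℕ) (hl : ∀ n, ∑ i, l n i = n)
    (hla : ∀ i, Filter.Tendsto (fun n => (l n i : ℝ) / n) Filter.atTop (nhds (a i)))
    (b : ℕ → ℕ → Fin σ)
    (hb : ∀ n, ∀ j < n, ∀ i : Fin σ, b n j = i ↔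
      (∑ k ∈ univ.filter (fun k => k < i), l n k) ≤ j ∧
        j < (∑ k ∈ univ.filter (fun k => k < i), l n k) + l n i)
    (T : ℕ → ℕ)
    (hT : Filter.Tendsto (fun n => (T n : ℝ) / n) Filter.atTop (nhds μ)) :
    Filter.Tendsto (fun n : ℕ => (1 / (n : ℝ)) * Real.log
        (∑ x ∈ univ.filter (fun x : Fin n → Bool =>
            (∑ j, if x j then 1 else 0) ≤ T n),
          ∏ j : Fin n, (if x j then (s (b n j.val) : ℝ) - 1 else 1)))
      Filter.atTop
      (nhds (sSup {v : ℝ | ∃ θ : Fin σ → ℝ,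
        (∀ i, θ i ∈ Set.Ioo (0 : ℝ) 1) ∧ (∑ i, a i * θ i) ≤ μ ∧
        v = ∑ i, a i * (θ i * Real.log ((s i : ℝ) - 1) + Hent (θ i))})) := by
  have hc : ∀ i, (0 : ℝ) < s i - 1 := fun i => by
    have : (2 : ℝ) ≤ s i := by exact_mod_cast hs i
    linarith
  have hβ : ∀ n i, #{j : Fin n | b n j = i} = l n i :=
    fun n => card_filter_eq_of_block (hl n) (hb n)
  obtain ⟨η, hη, hmax⟩ := exists_isGreatest_sum_mul_log_add_Hent (fun i => (ha i).le) hc hμ.1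
  rw [hmax.csSup_eq]
  refine tendsto_order.2 ⟨fun x hx => ?_, fun x hx => ?_⟩
  · obtain ⟨θ, hθ, hθμ, hval⟩ := hmax.1
    obtain ⟨θ', hθ', hθ'μ, hxθ'⟩ := exists_lt_sum_mul_log_add_Hent hμ.1 hθ hθμ (hval ▸ hx)
    exact eventually_lt_log_hammingBallWeight_div ha hc hla hβ hT hθ' hθ'μ hxθ'
  · exact eventually_log_hammingBallWeight_div_lt (fun i => (hc i).le) hla hβ hT hη hx

/-- large deviations limit for the Gilbert–Varshamov bound:
same as for the Rao bound but with `T_n/n → μ` and the inequality constraint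
`∑ a_i θ_i ≤ μ`. -/
theorem gilbert_varshamov_large_deviations_limit
    (σ : ℕ) (hσ : 1 ≤ σ) (s : Fin σ → ℕ) (hs : ∀ i, 2 ≤ s i)
    (a : Fin σ → ℝ) (ha : ∀ i, 0 < a i) (hsuma : ∑ i, a i = 1)
    (μ : ℝ) (hμ : μ ∈ Set.Ioo (0 : ℝ) 1)
    (l : ℕ → Fin σ → ℕ) (hl : ∀ n, ∑ i, l n i = n)
    (hla : ∀ i, Filter.Tendsto (fun n => (l n i : ℝ) / n) Filter.atTop (nhds (a i)))
    (b : ℕ → ℕ → Fin σ)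
    (hb : ∀ n, ∀ j < n, ∀ i : Fin σ, b n j = i ↔
      (∑ k ∈ univ.filter (fun k => k < i), l n k) ≤ j ∧
        j < (∑ k ∈ univ.filter (fun k => k < i), l n k) + l n i)
    (T : ℕ → ℕ)
    (hT : Filter.Tendsto (fun n => (T n : ℝ) / n) Filter.atTop (nhds μ)) :
    Filter.Tendsto (fun n : ℕ => (1 / (n : ℝ)) * Real.log
        (∑ x ∈ univ.filter (fun x : Fin n → Bool =>
            (∑ j, if x j then 1 else 0) ≤ T n),
          ∏ j : Fin n, (if x j then (s (b n j.val) : ℝ) - 1 else 1)))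
      Filter.atTop
      (nhds (sSup {v : ℝ | ∃ θ : Fin σ → ℝ,
        (∀ i, θ i ∈ Set.Ioo (0 : ℝ) 1) ∧ (∑ i, a i * θ i) ≤ μ ∧
        v = ∑ i, a i * (θ i * Real.log ((s i : ℝ) - 1) + Hent (θ i))})) :=
  gilbert_varshamov_large_deviations_limit_general σ s hs a ha μ hμ l hl hla b hb T hT
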